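/- (Wang–Harnack inequality.) Let f : ℝ^d × ℝ^d → ℝ be a nonnegative bounded Borel function. Then for every t > 0, every α > 1, and all points (p,ξ), (p′,ξ′) ∈ ℝ^d × ℝ^d, (P_t f(p,ξ))^α ≤ C_α(t,(p,ξ),(p′,ξ′)) · P_t(f^α)(p′,ξ′), where C_α(t,(p,ξ),(p′,ξ′)) = exp( (α/(α−1)) · [ (6/(σ² t³)) Σ_{i=1}^d ((t/2)(p′_i − p_i) + (ξ′_i − ξ_i))² + (1/(2σ² t)) Σ_{i=1}^d (p′_i − p_i)² ] ). -/

import Mathlib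

open MeasureTheory Real
open scoped RealInnerProductSpace NNReal

noncomputable section

abbrev Ed (d : ℕ) : Type := EuclideanSpace ℝ (Fin d)

/-- Density of the Gaussian law of `(B_t, ∫_0^t B_s ds)` for a `d`-dimensional
Brownian motion with variance `σ²`. -/
def kolDensity (d : ℕ) (σ t : ℝ) (z : Ed d × Ed d) : ℝ :=
  ∏ i : Fin d, (Real.sqrt 3 / (Real.pi * σ ^ 2 * t ^ 2)) *
    Real.exp (-(2 / σ ^ 2) *
      ((z.1 i) ^ 2 / t - 3 * z.1 i * z.2 i / t ^ 2 + 3 * (z.2 i) ^ 2 / t ^ 3))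

/-- The Kolmogorov semigroup `P_t`. -/
def kolP (d : ℕ) (σ t : ℝ) (f : Ed d × Ed d → ℝ) (x : Ed d × Ed d) : ℝ :=
  if t = 0 then f x
  else ∫ z : Ed d × Ed d, f (x.1 + z.1, x.2 + t • x.1 + z.2) * kolDensity d σ t z

/-- Partial derivative in the variable `p_i`. -/
def dP (d : ℕ) (i : Fin d) (f : Ed d × Ed d → ℝ) (x : Ed d × Ed d) : ℝ :=
  fderiv ℝ f x ((EuclideanSpace.single i 1 : Ed d), (0 : Ed d))

/-- Partial derivative in the variable `ξ_i`. -/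
def dXi (d : ℕ) (i : Fin d) (f : Ed d × Ed d → ℝ) (x : Ed d × Ed d) : ℝ :=
  fderiv ℝ f x ((0 : Ed d), (EuclideanSpace.single i 1 : Ed d))

/-- Gradient in the `p` variable. -/
def gradP (d : ℕ) (f : Ed d × Ed d → ℝ) (x : Ed d × Ed d) : Ed d :=
  gradient (fun p => f (p, x.2)) x.1

/-- Gradient in the `ξ` variable. -/
def gradXi (d : ℕ) (f : Ed d × Ed d → ℝ) (x : Ed d × Ed d) : Ed d :=
  gradient (fun ξ => f (x.1, ξ)) x.2

/-!
The shift `c = (p' - p, ξ' - ξ + t (p' - p))` carries the Kolmogorov flow started at `(p, ξ)`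
to the one started at `(p', ξ')`, so `P_t f(p, ξ) = ∫ g(z) ρ(z + c) dz` and
`P_t(f^α)(p', ξ') = ∫ g^α ρ` with `g(z) = f(p' + z₁, ξ' + t p' + z₂)`. Hölder's inequality
with exponents `α` and `β = α / (α - 1)`, applied to `g ρ^{1/α}` and `ρ(· + c) ρ^{-1/α}`,
bounds `(P_t f(p, ξ))^α` by `(∫ ρ(z + c)^β ρ(z)^{1-β} dz)^{α-1} P_t(f^α)(p', ξ')`.
Since `ρ = K e^{-E}` with `E` a quadratic form,
`β E(z + c) + (1 - β) E(z) = E(z + β c) + β (1 - β) E(c)`, so this moment equals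
`exp(β (β - 1) E(c))`, and `E(c)` is the bracket in the constant.
-/

open Finset

section Holder

variable {Ω : Type*} [MeasurableSpace Ω] {μ : Measure Ω} {p q : ℝ}

lemma memLp_ofReal_of_integrable_rpow {f : Ω → ℝ} (hf : AEStronglyMeasurable f μ)
    (hf0 : ∀ x, 0 ≤ f x) (hp : 0 < p) (h : Integrable (fun x => f x ^ p) μ) :
    MemLp f (ENNReal.ofReal p) μ := by
  rw [← integrable_norm_rpow_iff hf (by simpa using hp) ENNReal.ofReal_ne_top,
    ENNReal.toReal_ofReal hp.le]
  simpa only [Real.norm_of_nonneg (hf0 _)] using h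

theorem rpow_integral_mul_le_of_holderConjugate (hpq : p.HolderConjugate q) {g ρ ρ' : Ω → ℝ}
    (hg : Measurable g) (hρ : Measurable ρ) (hρ' : Measurable ρ')
    (hg0 : ∀ x, 0 ≤ g x) (hρ0 : ∀ x, 0 < ρ x) (hρ'0 : ∀ x, 0 ≤ ρ' x)
    (hgρ : Integrable (fun x => g x ^ p * ρ x) μ)
    (hρ'ρ : Integrable (fun x => ρ' x ^ q * ρ x ^ (1 - q)) μ) :
    (∫ x, g x * ρ' x ∂μ) ^ p ≤
      (∫ x, ρ' x ^ q * ρ x ^ (1 - q) ∂μ) ^ (p - 1) * ∫ x, g x ^ p * ρ x ∂μ := by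
  have hF0 : ∀ x, 0 ≤ g x * ρ x ^ p⁻¹ := fun x => mul_nonneg (hg0 x) (rpow_nonneg (hρ0 x).le _)
  have hG0 : ∀ x, 0 ≤ ρ' x * ρ x ^ (-p⁻¹) :=
    fun x => mul_nonneg (hρ'0 x) (rpow_nonneg (hρ0 x).le _)
  have hFp : ∀ x, (g x * ρ x ^ p⁻¹) ^ p = g x ^ p * ρ x := fun x => by
    rw [mul_rpow (hg0 x) (rpow_nonneg (hρ0 x).le _), ← rpow_mul (hρ0 x).le,
      inv_mul_cancel₀ hpq.ne_zero, rpow_one]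
  have hGq : ∀ x, (ρ' x * ρ x ^ (-p⁻¹)) ^ q = ρ' x ^ q * ρ x ^ (1 - q) := fun x => by
    have hexp : -p⁻¹ * q = 1 - q := by
      have := hpq.inv_add_inv_eq_one
      field_simp [hpq.ne_zero, hpq.symm.ne_zero] at this ⊢
      linarith
    rw [mul_rpow (hρ'0 x) (rpow_nonneg (hρ0 x).le _), ← rpow_mul (hρ0 x).le, hexp]
  have hFG : ∀ x, g x * ρ x ^ p⁻¹ * (ρ' x * ρ x ^ (-p⁻¹)) = g x * ρ' x := fun x => by
    rw [rpow_neg (hρ0 x).le]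
    field_simp [(rpow_pos_of_pos (hρ0 x) p⁻¹).ne']
  have holder := integral_mul_le_Lp_mul_Lq_of_nonneg (μ := μ) hpq (.of_forall hF0) (.of_forall hG0)
    (memLp_ofReal_of_integrable_rpow (by fun_prop) hF0 hpq.pos (by simpa only [hFp] using hgρ))
    (memLp_ofReal_of_integrable_rpow (by fun_prop) hG0 hpq.symm.pos
      (by simpa only [hGq] using hρ'ρ))
  simp only [hFG, hFp, hGq] at holder
  have hI0 : 0 ≤ ∫ x, g x ^ p * ρ x ∂μ :=
    integral_nonneg fun x => mul_nonneg (rpow_nonneg (hg0 x) _) (hρ0 x).le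
  have hJ0 : 0 ≤ ∫ x, ρ' x ^ q * ρ x ^ (1 - q) ∂μ :=
    integral_nonneg fun x => mul_nonneg (rpow_nonneg (hρ'0 x) _) (rpow_nonneg (hρ0 x).le _)
  calc (∫ x, g x * ρ' x ∂μ) ^ p
      ≤ ((∫ x, g x ^ p * ρ x ∂μ) ^ (1 / p) * (∫ x, ρ' x ^ q * ρ x ^ (1 - q) ∂μ) ^ (1 / q)) ^ p :=
        rpow_le_rpow (integral_nonneg fun x => mul_nonneg (hg0 x) (hρ'0 x)) holder hpq.nonneg
    _ = _ := by
      rw [mul_rpow (rpow_nonneg hI0 _) (rpow_nonneg hJ0 _), ← rpow_mul hI0, ← rpow_mul hJ0,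
        one_div_mul_cancel hpq.ne_zero, rpow_one, one_div_mul_eq_div, hpq.div_conj_eq_sub_one,
        mul_comm]

end Holder

theorem integrable_exp_neg_mul_sq_mul_exp_neg_mul_sub_sq {a b : ℝ} (ha : 0 < a) (hb : 0 < b)
    (s : ℝ) :
    Integrable (fun w : ℝ × ℝ => exp (-a * w.1 ^ 2) * exp (-b * (w.2 - s * w.1) ^ 2)) := by
  have hshear : MeasurePreserving (fun w : ℝ × ℝ => (w.1, w.2 - s * w.1))
      (volume.prod volume) (volume.prod volume) :=
    (MeasurePreserving.id volume).skew_product (by fun_prop)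
      (.of_forall fun x => (measurePreserving_sub_right volume (s * x)).map_eq)
  exact hshear.integrable_comp_of_integrable
    ((integrable_exp_neg_mul_sq ha).mul_prod (integrable_exp_neg_mul_sq hb))

theorem integral_exp_neg_mul_sq_mul_exp_neg_mul_sub_sq {a b : ℝ} (ha : 0 < a) (hb : 0 < b)
    (s : ℝ) :
    ∫ w : ℝ × ℝ, exp (-a * w.1 ^ 2) * exp (-b * (w.2 - s * w.1) ^ 2) = √(π / a) * √(π / b) := by
  rw [Measure.volume_eq_prod,
    integral_prod _ (integrable_exp_neg_mul_sq_mul_exp_neg_mul_sub_sq ha hb s)]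
  simp only [integral_const_mul,
    integral_sub_right_eq_self (fun y => exp (-b * y ^ 2)), integral_gaussian, integral_mul_const]

def kolEnergy (d : ℕ) (σ t : ℝ) (z : Ed d × Ed d) : ℝ :=
  ∑ i : Fin d, 2 / σ ^ 2 * ((z.1 i) ^ 2 / t - 3 * z.1 i * z.2 i / t ^ 2 + 3 * (z.2 i) ^ 2 / t ^ 3)

def kolDensity₁ (σ t : ℝ) (w : ℝ × ℝ) : ℝ :=
  Real.sqrt 3 / (Real.pi * σ ^ 2 * t ^ 2) *
    Real.exp (-(2 / σ ^ 2) * (w.1 ^ 2 / t - 3 * w.1 * w.2 / t ^ 2 + 3 * w.2 ^ 2 / t ^ 3))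

lemma quadratic_eq_add_sq {σ t : ℝ} (hσ : σ ≠ 0) (ht : t ≠ 0) (x y : ℝ) :
    2 / σ ^ 2 * (x ^ 2 / t - 3 * x * y / t ^ 2 + 3 * y ^ 2 / t ^ 3) =
      1 / (2 * σ ^ 2 * t) * x ^ 2 + 6 / (σ ^ 2 * t ^ 3) * (y - t / 2 * x) ^ 2 := by
  field_simp
  ring

section KolmogorovDensity

variable {d : ℕ} {σ t : ℝ}

lemma kolDensity_eq_exp (hσ : σ ≠ 0) (ht : t ≠ 0) (z : Ed d × Ed d) :
    kolDensity d σ t z = exp (d * log (√3 / (π * σ ^ 2 * t ^ 2)) - kolEnergy d σ t z) := by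
  have hK : 0 < √3 / (π * σ ^ 2 * t ^ 2) := by positivity
  rw [kolDensity, kolEnergy, prod_mul_distrib, prod_const, card_univ, Fintype.card_fin,
    ← exp_sum, ← exp_log (pow_pos hK d), log_pow, ← exp_add, sub_eq_add_neg,
    ← sum_neg_distrib]
  simp only [neg_mul]

lemma kolDensity_pos (hσ : σ ≠ 0) (ht : t ≠ 0) (z : Ed d × Ed d) : 0 < kolDensity d σ t z := by
  rw [kolDensity_eq_exp hσ ht]
  exact exp_pos _

lemma measurable_kolDensity : Measurable (kolDensity d σ t) := by
  unfold kolDensity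
  fun_prop

lemma kolDensity₁_eq (hσ : σ ≠ 0) (ht : t ≠ 0) (w : ℝ × ℝ) :
    kolDensity₁ σ t w = √3 / (π * σ ^ 2 * t ^ 2) *
      (exp (-(1 / (2 * σ ^ 2 * t)) * w.1 ^ 2) *
        exp (-(6 / (σ ^ 2 * t ^ 3)) * (w.2 - t / 2 * w.1) ^ 2)) := by
  rw [kolDensity₁, ← exp_add, neg_mul, quadratic_eq_add_sq hσ ht]
  ring_nf

lemma integrable_kolDensity₁ (hσ : σ ≠ 0) (ht : 0 < t) : Integrable (kolDensity₁ σ t) := by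
  simp_rw [funext (kolDensity₁_eq hσ ht.ne')]
  exact (integrable_exp_neg_mul_sq_mul_exp_neg_mul_sub_sq (by positivity) (by positivity)
    _).const_mul _

lemma integral_kolDensity₁ (hσ : σ ≠ 0) (ht : 0 < t) : ∫ w, kolDensity₁ σ t w = 1 := by
  simp_rw [kolDensity₁_eq hσ ht.ne']
  rw [integral_const_mul, integral_exp_neg_mul_sq_mul_exp_neg_mul_sub_sq (by positivity)
    (by positivity), ← sqrt_mul (by positivity)]
  have h3 : (√3) ^ 2 = 3 := sq_sqrt (by norm_num)
  have hxy : π / (1 / (2 * σ ^ 2 * t)) * (π / (6 / (σ ^ 2 * t ^ 3))) =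
      (π * σ ^ 2 * t ^ 2 / √3) ^ 2 := by
    rw [div_pow, h3]
    field_simp
    ring
  rw [hxy, sqrt_sq (by positivity)]
  field_simp

def coordPairsEquiv (d : ℕ) : (Fin d → ℝ × ℝ) ≃ᵐ Ed d × Ed d :=
  (MeasurableEquiv.arrowProdEquivProdArrow ℝ ℝ (Fin d)).trans
    ((MeasurableEquiv.toLp 2 (Fin d → ℝ)).prodCongr (MeasurableEquiv.toLp 2 (Fin d → ℝ)))

lemma measurePreserving_coordPairsEquiv (d : ℕ) :
    MeasurePreserving (coordPairsEquiv d) volume volume :=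
  (measurePreserving_arrowProdEquivProdArrow ℝ ℝ (Fin d) (fun _ => volume) (fun _ => volume)).trans
    ((EuclideanSpace.volume_preserving_symm_measurableEquiv_toLp (Fin d)).symm.prod
      (EuclideanSpace.volume_preserving_symm_measurableEquiv_toLp (Fin d)).symm)

lemma kolDensity_comp_coordPairsEquiv :
    kolDensity d σ t ∘ coordPairsEquiv d = fun w => ∏ i, kolDensity₁ σ t (w i) := rfl

lemma integrable_kolDensity (hσ : σ ≠ 0) (ht : 0 < t) : Integrable (kolDensity d σ t) := by
  rw [← (measurePreserving_coordPairsEquiv d).integrable_comp_emb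
    (coordPairsEquiv d).measurableEmbedding, kolDensity_comp_coordPairsEquiv]
  exact Integrable.fintype_prod (f := fun _ => kolDensity₁ σ t)
    fun _ => integrable_kolDensity₁ hσ ht

lemma integral_kolDensity (hσ : σ ≠ 0) (ht : 0 < t) : ∫ z, kolDensity d σ t z = 1 := by
  rw [← (measurePreserving_coordPairsEquiv d).integral_comp']
  change ∫ w, (kolDensity d σ t ∘ coordPairsEquiv d) w = 1
  rw [kolDensity_comp_coordPairsEquiv, integral_fintype_prod_volume_eq_pow,
    integral_kolDensity₁ hσ ht, one_pow]

end KolmogorovDensity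

section KolmogorovShift

variable {d : ℕ} {σ t : ℝ}

-- Instance search does not unfold `volume` on a product to `volume.prod volume`.
instance : (volume : Measure (Ed d × Ed d)).IsAddRightInvariant :=
  Measure.prod.instIsAddRightInvariant

lemma kolEnergy_interpolate (β : ℝ) (z c : Ed d × Ed d) :
    β * kolEnergy d σ t (z + c) + (1 - β) * kolEnergy d σ t z =
      kolEnergy d σ t (z + β • c) + β * (1 - β) * kolEnergy d σ t c := by
  simp only [kolEnergy, mul_sum, ← sum_add_distrib]
  refine sum_congr rfl fun i _ => ?_
  simp only [Prod.fst_add, Prod.snd_add, Prod.smul_fst, Prod.smul_snd, PiLp.add_apply,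
    PiLp.smul_apply, smul_eq_mul]
  ring

lemma kolDensity_add_rpow_mul_rpow (hσ : σ ≠ 0) (ht : t ≠ 0) (β : ℝ) (z c : Ed d × Ed d) :
    kolDensity d σ t (z + c) ^ β * kolDensity d σ t z ^ (1 - β) =
      exp (β * (β - 1) * kolEnergy d σ t c) * kolDensity d σ t (z + β • c) := by
  simp only [kolDensity_eq_exp hσ ht, ← exp_mul, ← exp_add]
  congr 1
  linear_combination -kolEnergy_interpolate (σ := σ) (t := t) β z c

lemma integrable_kolDensity_add_rpow_mul_rpow (hσ : σ ≠ 0) (ht : 0 < t) (β : ℝ)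
    (c : Ed d × Ed d) :
    Integrable (fun z => kolDensity d σ t (z + c) ^ β * kolDensity d σ t z ^ (1 - β)) := by
  simp only [kolDensity_add_rpow_mul_rpow hσ ht.ne']
  exact ((integrable_kolDensity hσ ht).comp_add_right (β • c)).const_mul _

lemma integral_kolDensity_add_rpow_mul_rpow (hσ : σ ≠ 0) (ht : 0 < t) (β : ℝ)
    (c : Ed d × Ed d) :
    ∫ z, kolDensity d σ t (z + c) ^ β * kolDensity d σ t z ^ (1 - β) =
      exp (β * (β - 1) * kolEnergy d σ t c) := by
  simp only [kolDensity_add_rpow_mul_rpow hσ ht.ne']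
  rw [integral_const_mul, integral_add_right_eq_self, integral_kolDensity hσ ht, mul_one]

lemma kolEnergy_shift (ht : t ≠ 0) (p ξ p' ξ' : Ed d) :
    kolEnergy d σ t (p' - p, ξ' - ξ + t • (p' - p)) =
      6 / (σ ^ 2 * t ^ 3) * ∑ i : Fin d, (t / 2 * (p' i - p i) + (ξ' i - ξ i)) ^ 2
        + 1 / (2 * σ ^ 2 * t) * ∑ i : Fin d, (p' i - p i) ^ 2 := by
  simp only [kolEnergy, mul_sum, ← sum_add_distrib]
  refine sum_congr rfl fun i _ => ?_
  simp only [PiLp.add_apply, PiLp.sub_apply, PiLp.smul_apply, smul_eq_mul]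
  field_simp
  ring

lemma kolP_eq_integral_shift (ht : t ≠ 0) (f : Ed d × Ed d → ℝ) (p ξ p' ξ' : Ed d) :
    kolP d σ t f (p, ξ) = ∫ z, f (p' + z.1, ξ' + t • p' + z.2) *
      kolDensity d σ t (z + (p' - p, ξ' - ξ + t • (p' - p))) := by
  rw [kolP, if_neg ht, ← integral_add_right_eq_self _ (p' - p, ξ' - ξ + t • (p' - p))]
  congr 1 with z
  congr 2
  exact Prod.ext (by simp only [Prod.fst_add]; abel) (by simp only [Prod.snd_add, smul_sub]; abel)

end KolmogorovShift

theorem kolmogorov_wang_harnack_general (d : ℕ) (σ : ℝ) (hσ : 0 < σ)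
    (f : Ed d × Ed d → ℝ) (hmeas : Measurable f) (hnn : ∀ x, 0 ≤ f x)
    (C : ℝ) (hbd : ∀ x, f x ≤ C)
    (t : ℝ) (ht : 0 < t) (α : ℝ) (hα : 1 < α) (p ξ p' ξ' : Ed d) :
    kolP d σ t f (p, ξ) ^ α ≤
      Real.exp (α / (α - 1) *
          (6 / (σ ^ 2 * t ^ 3) * ∑ i : Fin d, (t / 2 * (p' i - p i) + (ξ' i - ξ i)) ^ 2
            + 1 / (2 * σ ^ 2 * t) * ∑ i : Fin d, (p' i - p i) ^ 2)) *
        kolP d σ t (fun x => f x ^ α) (p', ξ') := by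
  set β := α / (α - 1)
  have hpq : α.HolderConjugate β := (Real.holderConjugate_iff_eq_conjExponent hα).2 rfl
  set c : Ed d × Ed d := (p' - p, ξ' - ξ + t • (p' - p))
  set g : Ed d × Ed d → ℝ := fun z => f (p' + z.1, ξ' + t • p' + z.2)
  have hg : Measurable g := hmeas.comp (by fun_prop)
  have hgρ : Integrable (fun z => g z ^ α * kolDensity d σ t z) :=
    (integrable_kolDensity hσ.ne' ht).bdd_mul (hg.pow_const α).aestronglyMeasurable
      (.of_forall fun z => by
        rw [Real.norm_of_nonneg (rpow_nonneg (hnn _) _)]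
        exact rpow_le_rpow (hnn _) (hbd _) hpq.nonneg)
  have hρ0 := kolDensity_pos (d := d) hσ.ne' ht.ne'
  calc kolP d σ t f (p, ξ) ^ α = (∫ z, g z * kolDensity d σ t (z + c)) ^ α := by
        rw [kolP_eq_integral_shift ht.ne' f p ξ p' ξ']
    _ ≤ (∫ z, kolDensity d σ t (z + c) ^ β * kolDensity d σ t z ^ (1 - β)) ^ (α - 1) *
          ∫ z, g z ^ α * kolDensity d σ t z :=
        rpow_integral_mul_le_of_holderConjugate hpq hg measurable_kolDensity
          (measurable_kolDensity.comp (measurable_add_const c)) (fun _ => hnn _) hρ0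
          (fun _ => (hρ0 _).le) hgρ
          (integrable_kolDensity_add_rpow_mul_rpow hσ.ne' ht β c)
    _ = _ := by
      have hβ : β * (β - 1) * (α - 1) = β := by linear_combination β * hpq.sub_one_mul_conj
      rw [integral_kolDensity_add_rpow_mul_rpow hσ.ne' ht, ← exp_mul, mul_right_comm, hβ,
        kolEnergy_shift ht.ne', kolP, if_neg ht.ne']

/-- **Wang–Harnack inequality for the Kolmogorov semigroup.**
For a nonnegative bounded Borel function `f`, `t > 0`, `α > 1` and any two points,
`(P_t f(p,ξ))^α ≤ C_α(t,(p,ξ),(p',ξ')) · P_t(f^α)(p',ξ')` with the explicit constant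
`C_α = exp((α/(α−1))[(6/(σ²t³)) ∑ ((t/2)(p'_i−p_i)+(ξ'_i−ξ_i))² + (1/(2σ²t)) ∑ (p'_i−p_i)²])`. -/
theorem kolmogorov_wang_harnack (d : ℕ) (hd : 1 ≤ d) (σ : ℝ) (hσ : 0 < σ)
    (f : Ed d × Ed d → ℝ) (hmeas : Measurable f) (hnn : ∀ x, 0 ≤ f x)
    (C : ℝ) (hbd : ∀ x, f x ≤ C)
    (t : ℝ) (ht : 0 < t) (α : ℝ) (hα : 1 < α) (p ξ p' ξ' : Ed d) :
    kolP d σ t f (p, ξ) ^ α ≤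
      Real.exp (α / (α - 1) *
          (6 / (σ ^ 2 * t ^ 3) * ∑ i : Fin d, (t / 2 * (p' i - p i) + (ξ' i - ξ i)) ^ 2
            + 1 / (2 * σ ^ 2 * t) * ∑ i : Fin d, (p' i - p i) ^ 2)) *
        kolP d σ t (fun x => f x ^ α) (p', ξ') :=
  kolmogorov_wang_harnack_general d σ hσ f hmeas hnn C hbd t ht α hα p ξ p' ξ'
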